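/- arXiv:2401.14138 — 2 statements merged into one kernel-verified Lean document; each statement's English description precedes it below -/
import Mathlib

section
/- Let p be a prime with p ≡ 1 (mod 4), let e be an even positive integer, and set n = p^e. Then the discriminant of F_n(x) is the square of a rational number if and only if the integer 𝒫_n = ∏_θ F̃_n(θ) (θ ranging over the nontrivial n-th roots of unity in ℂ) is the square of an integer. -/
open Polynomial BigOperators

/-!
The roots of `F_n' = 1 + x + ⋯ + x^{n-1}` are the nontrivial `n`-th roots of unity `θ`, so the
symmetry `Res(f, g) = ± Res(g, f)` of the resultant turns `Res(F_n, F_n')` into `∏_θ F_n(θ)` and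
gives `disc F_n = (-1)^{n(n-1)/2} · n · L_n^{-(n-1)} · 𝒫_n`. For `n = p^e` with `e` even, `n` is an
odd square, so the sign is `+1` and `n · L_n^{-(n-1)}` is the square of a nonzero rational.
Hence `disc F_n` is a rational square iff `𝒫_n` is; and as `𝒫_n` is an algebraic integer (the `θ`
are, and `F̃_n` has integer coefficients), a rational square root of it is a rational integer.
-/

/-- `F n` is the truncated logarithmic polynomial `1 + x + x²/2 + ⋯ + xⁿ/n ∈ ℚ[x]`. -/
noncomputable def F (n : ℕ) : Polynomial ℚ :=
  1 + ∑ k ∈ Finset.Icc 1 n, Polynomial.C ((k : ℚ)⁻¹) * Polynomial.X ^ k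

/-- `Ln n = lcm {1, 2, …, n}`. -/
def Ln (n : ℕ) : ℕ := (Finset.Icc 1 n).lcm id

/-- `Ftilde n = Ln n • F n`, a polynomial with integer coefficients. -/
noncomputable def Ftilde (n : ℕ) : Polynomial ℚ := Polynomial.C ((Ln n : ℚ)) * F n

/-- The resultant `Res(P, Q)` of two polynomials over `ℚ`, computed in `ℂ` via the
product formula `Res(P,Q) = lc(P)^(deg Q) * ∏_{P(r)=0} Q(r)` (roots with multiplicity). -/
noncomputable def resC (P Q : Polynomial ℚ) : ℂ :=
  ((P.leadingCoeff : ℂ)) ^ Q.natDegree *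
    ((P.map (algebraMap ℚ ℂ)).roots.map (fun r => (Q.map (algebraMap ℚ ℂ)).eval r)).prod

/-- The discriminant `disc P = (−1)^(n(n−1)/2) ⬝ a_n⁻¹ ⬝ Res(P, P′)`, as a complex number. -/
noncomputable def discC (P : Polynomial ℚ) : ℂ :=
  (-1) ^ (P.natDegree.choose 2) * ((P.leadingCoeff : ℂ))⁻¹ * resC P (Polynomial.derivative P)

/-- `𝒫 n = ∏_θ F̃_n(θ)`, the product over the nontrivial `n`-th roots of unity in `ℂ`. -/
noncomputable def P (n : ℕ) : ℂ :=
  ∏ θ ∈ (Polynomial.nthRootsFinset n (1 : ℂ)).erase 1, (Polynomial.aeval θ) (Ftilde n)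

/-- `Xc m ω = ∏_{k=1}^{m−1} (1/m + ω^k + ω^{2k}/2 + ⋯ + ω^{(m−1)k}/(m−1))`. -/
noncomputable def Xc (m : ℕ) (ω : ℂ) : ℂ :=
  ∏ k ∈ Finset.Icc 1 (m - 1), ((m : ℂ)⁻¹ + ∑ j ∈ Finset.Icc 1 (m - 1), ω ^ (j * k) / (j : ℂ))

/-- `Y m = 1 + 1/2 + ⋯ + 1/m ∈ ℚ`. -/
def Y (m : ℕ) : ℚ := ∑ j ∈ Finset.Icc 1 m, (j : ℚ)⁻¹

namespace Polynomial

theorem geom_sum_X_eq_prod_erase_one {K : Type*} [CommRing K] [IsDomain K] [DecidableEq K]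
    {ζ : K} {n : ℕ} (hn : 0 < n) (hζ : IsPrimitiveRoot ζ n) :
    ∑ i ∈ Finset.range n, (X : K[X]) ^ i = ∏ θ ∈ (nthRootsFinset n (1 : K)).erase 1, (X - C θ) := by
  refine mul_left_cancel₀ (X_sub_C_ne_zero 1) ?_
  rw [Finset.mul_prod_erase _ (fun θ => X - C θ) (one_mem_nthRootsFinset hn),
    ← X_pow_sub_one_eq_prod hn hζ, map_one, mul_comm, geom_sum_mul]

end Polynomial

theorem Rat.exists_int_eq_of_isIntegral_pow {K : Type*} [Field K] [Algebra ℚ K] {q : ℚ} {k : ℕ}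
    (hk : 0 < k) (h : IsIntegral ℤ (algebraMap ℚ K q ^ k)) : ∃ z : ℤ, (z : ℚ) = q := by
  rw [← map_pow] at h
  exact IsIntegrallyClosed.isIntegral_iff.mp (h.tower_bot_of_field.of_pow hk)

theorem resC_eq_resultant (P Q : ℚ[X]) :
    resC P Q = resultant (P.map (algebraMap ℚ ℂ)) (Q.map (algebraMap ℚ ℂ)) := by
  rw [resultant_eq_prod_eval _ _ _ le_rfl (IsAlgClosed.splits _), leadingCoeff_map, natDegree_map]
  rfl

theorem resC_comm (P Q : ℚ[X]) : resC P Q = (-1) ^ (P.natDegree * Q.natDegree) * resC Q P := by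
  rw [resC_eq_resultant, resC_eq_resultant, resultant_comm, natDegree_map, natDegree_map]

theorem natDegree_F_le (n : ℕ) : (F n).natDegree ≤ n := by
  refine natDegree_add_le_of_degree_le (by simp) (natDegree_sum_le_of_forall_le _ _ fun k hk => ?_)
  exact (natDegree_C_mul_X_pow_le _ _).trans (Finset.mem_Icc.mp hk).2

theorem coeff_F_self {n : ℕ} (hn : 0 < n) : (F n).coeff n = (n : ℚ)⁻¹ := by
  simp [F, coeff_one, coeff_X_pow, hn.ne', Finset.mem_Icc, Nat.one_le_iff_ne_zero]

theorem natDegree_F {n : ℕ} (hn : 0 < n) : (F n).natDegree = n :=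
  le_antisymm (natDegree_F_le n) (le_natDegree_of_ne_zero (by simp [coeff_F_self hn, hn.ne']))

theorem leadingCoeff_F {n : ℕ} (hn : 0 < n) : (F n).leadingCoeff = (n : ℚ)⁻¹ := by
  rw [leadingCoeff, natDegree_F hn, coeff_F_self hn]

theorem derivative_F (n : ℕ) : derivative (F n) = ∑ k ∈ Finset.range n, X ^ k := by
  rw [F, derivative_add, derivative_one, zero_add, derivative_sum,
    ← Finset.Ico_add_one_right_eq_Icc, Finset.sum_Ico_eq_sum_range, Nat.add_sub_cancel]
  refine Finset.sum_congr rfl fun k _ => ?_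
  rw [derivative_C_mul_X_pow, Nat.add_sub_cancel_left, add_comm 1 k, Nat.cast_add_one,
    inv_mul_cancel₀ (Nat.cast_add_one_ne_zero k), C_1, one_mul]

theorem map_derivative_F {n : ℕ} (hn : 0 < n) :
    (derivative (F n)).map (algebraMap ℚ ℂ) =
      ∏ θ ∈ (nthRootsFinset n (1 : ℂ)).erase 1, (X - C θ) := by
  rw [derivative_F, Polynomial.map_sum]
  simp only [Polynomial.map_pow, map_X]
  exact geom_sum_X_eq_prod_erase_one hn (Complex.isPrimitiveRoot_exp n hn.ne')

theorem card_nthRootsFinset_erase_one {n : ℕ} (hn : 0 < n) :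
    ((nthRootsFinset n (1 : ℂ)).erase 1).card = n - 1 := by
  rw [Finset.card_erase_of_mem (one_mem_nthRootsFinset hn),
    (Complex.isPrimitiveRoot_exp n hn.ne').card_nthRootsFinset]

theorem resC_derivative_F {n : ℕ} (hn : 0 < n) :
    resC (derivative (F n)) (F n) = ∏ θ ∈ (nthRootsFinset n (1 : ℂ)).erase 1, aeval θ (F n) := by
  have hmonic : (derivative (F n)).Monic := derivative_F n ▸ monic_geom_sum_X hn.ne'
  rw [resC, hmonic.leadingCoeff, map_derivative_F hn, roots_prod_X_sub_C]
  simp only [eval_map_algebraMap, Rat.cast_one, one_pow, one_mul]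
  rfl

theorem natDegree_derivative_F {n : ℕ} (hn : 0 < n) : (derivative (F n)).natDegree = n - 1 := by
  rw [← natDegree_map (algebraMap ℚ ℂ), map_derivative_F hn, natDegree_finsetProd_X_sub_C_eq_card,
    card_nthRootsFinset_erase_one hn]

theorem Ln_pos (n : ℕ) : 0 < Ln n :=
  Nat.pos_of_ne_zero <| Finset.lcm_ne_zero_iff.mpr fun _ hk =>
    Nat.one_le_iff_ne_zero.mp (Finset.mem_Icc.mp hk).1

theorem P_eq_Ln_pow_mul_prod {n : ℕ} (hn : 0 < n) :
    P n = (Ln n : ℂ) ^ (n - 1) * ∏ θ ∈ (nthRootsFinset n (1 : ℂ)).erase 1, aeval θ (F n) := by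
  simp only [P, Ftilde, map_mul, aeval_C, Finset.prod_mul_distrib, Finset.prod_const,
    card_nthRootsFinset_erase_one hn]
  simp

theorem discC_F_eq {n : ℕ} (hn : 0 < n) :
    discC (F n) = (-1) ^ (n.choose 2) * n / (Ln n : ℂ) ^ (n - 1) * P n := by
  have hL : (Ln n : ℂ) ≠ 0 := Nat.cast_ne_zero.mpr (Ln_pos n).ne'
  have hsign : ((-1 : ℂ)) ^ (n * (n - 1)) = 1 := (Nat.even_mul_pred_self n).neg_one_pow
  rw [discC, resC_comm, natDegree_F hn, natDegree_derivative_F hn, resC_derivative_F hn,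
    P_eq_Ln_pow_mul_prod hn, leadingCoeff_F hn, hsign, Rat.cast_inv, Rat.cast_natCast]
  field_simp

theorem Ftilde_eq_map (n : ℕ) :
    Ftilde n = (C (Ln n : ℤ) + ∑ k ∈ Finset.Icc 1 n, C ((Ln n / k : ℕ) : ℤ) * X ^ k).map
      (algebraMap ℤ ℚ) := by
  simp only [Ftilde, F, Polynomial.map_add, Polynomial.map_sum, Polynomial.map_mul, map_C,
    Polynomial.map_pow, map_X, mul_add, mul_one, Finset.mul_sum, ← mul_assoc, ← C_mul]
  refine congr_arg₂ _ (by simp) (Finset.sum_congr rfl fun k hk => ?_)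
  have hk0 : (k : ℚ) ≠ 0 :=
    Nat.cast_ne_zero.mpr (Nat.one_le_iff_ne_zero.mp (Finset.mem_Icc.mp hk).1)
  have hdvd : k ∣ Ln n := Finset.dvd_lcm hk
  rw [eq_intCast, Int.cast_natCast, Nat.cast_div hdvd hk0, div_eq_mul_inv]

theorem isIntegral_P {n : ℕ} (hn : 0 < n) : IsIntegral ℤ (P n) := by
  refine IsIntegral.prod _ fun θ hθ => ?_
  have hθn : θ ^ n = 1 := (mem_nthRootsFinset hn 1).mp (Finset.mem_of_mem_erase hθ)
  have hθ : IsIntegral ℤ θ := .of_pow hn (hθn ▸ isIntegral_one)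
  rw [Ftilde_eq_map, aeval_map_algebraMap]
  exact .of_mem_of_fg _ hθ.fg_adjoin_singleton _ (aeval_mem_adjoin_singleton _ _)

theorem exists_rat_sq_eq_mul_iff_exists_int_sq {x : ℂ} (hx : IsIntegral ℤ x) {c : ℚ}
    (hc : c ≠ 0) : (∃ r : ℚ, (r : ℂ) ^ 2 = c ^ 2 * x) ↔ ∃ z : ℤ, (z : ℂ) ^ 2 = x := by
  have hc' : (c : ℂ) ≠ 0 := Rat.cast_ne_zero.mpr hc
  constructor
  · rintro ⟨r, hr⟩
    have hq : ((r / c : ℚ) : ℂ) ^ 2 = x := by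
      rw [Rat.cast_div, div_pow, hr, mul_div_cancel_left₀ _ (pow_ne_zero 2 hc')]
    obtain ⟨z, hz⟩ := Rat.exists_int_eq_of_isIntegral_pow (K := ℂ) two_pos
      (by rwa [eq_ratCast, hq])
    exact ⟨z, by rw [← hq, ← hz, Rat.cast_intCast]⟩
  · rintro ⟨z, rfl⟩
    exact ⟨c * z, by push_cast; ring⟩

theorem even_choose_two_of_mod_four_eq_one {n : ℕ} (hn : n % 4 = 1) : Even (n.choose 2) := by
  have h4 : 4 ∣ n * (n - 1) := Dvd.dvd.mul_left (by omega) n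
  rw [Nat.choose_two_right, Nat.even_iff]
  omega

theorem discC_F_sq_eq {m : ℕ} (hm : Odd m) :
    ∃ c : ℚ, c ≠ 0 ∧ discC (F (m ^ 2)) = c ^ 2 * P (m ^ 2) := by
  obtain ⟨j, rfl⟩ := hm
  have hsq : (2 * j + 1) ^ 2 = 4 * (j * j + j) + 1 := by ring
  have hsign : ((-1 : ℂ)) ^ ((2 * j + 1) ^ 2).choose 2 = 1 :=
    (even_choose_two_of_mod_four_eq_one (by omega)).neg_one_pow
  have hexp : (2 * j + 1) ^ 2 - 1 = (2 * (j * j + j)) * 2 := by omega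
  refine ⟨(2 * j + 1 : ℕ) / (Ln ((2 * j + 1) ^ 2) : ℚ) ^ (2 * (j * j + j)), ?_, ?_⟩
  · have := Ln_pos ((2 * j + 1) ^ 2)
    positivity
  · rw [discC_F_eq (by positivity), hsign, hexp, pow_mul]
    push_cast
    ring

theorem stmt7_general (p e n : ℕ) (hp4 : p % 4 = 1) (hee : Even e)
    (hn : n = p ^ e) :
    (∃ r : ℚ, (r : ℂ) ^ 2 = discC (F n)) ↔ (∃ z : ℤ, ((z : ℂ)) ^ 2 = P n) := by
  obtain ⟨a, rfl⟩ := hee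
  have hodd : Odd (p ^ a) := (Nat.odd_iff.mpr (by omega)).pow
  obtain ⟨c, hc, hdisc⟩ := discC_F_sq_eq hodd
  rw [hn, ← two_mul, pow_mul', hdisc]
  exact exists_rat_sq_eq_mul_iff_exists_int_sq (isIntegral_P (pow_pos hodd.pos 2)) hc

/-- If `p ≡ 1 (mod 4)` is prime, `e` is an even positive integer and `n = p^e`,
then `disc(F n)` is a rational square iff `𝒫 n` is the square of an integer. -/
theorem stmt7 (p e n : ℕ) (hp : p.Prime) (hp4 : p % 4 = 1) (he : 0 < e) (hee : Even e)
    (hn : n = p ^ e) :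
    (∃ r : ℚ, (r : ℂ) ^ 2 = discC (F n)) ↔ (∃ z : ℤ, ((z : ℂ)) ^ 2 = P n) :=
  stmt7_general p e n hp4 hee hn
end

section
/- Fix a positive integer m and let q be a prime with q > m and gcd(q,m) = 1, and set n = mq. If the rational numbers X(m) and Y(m) both have q-adic valuation 0, then the integer 𝒫_n = ∏_θ F̃_n(θ), with θ ranging over the nontrivial n-th roots of unity in ℂ, is not divisible by q. -/
open Polynomial BigOperators

/-!
`𝒫_n` is the resultant of `1 + x + ⋯ + x^(n-1)` and `F̃_n`, so `q ∤ 𝒫_n` means that these two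
polynomials have no common root in an algebraic closure of `𝔽_q`. For `n = m q`, only the terms
`x^(qj)` of `F̃_n` survive modulo `q`, and `F̃_n ≡ c (x + x²/2 + ⋯ + x^m/m)^q` with
`c = L_n / q` a unit (`q` divides `L_n` exactly once). A root `μ` of `1 + ⋯ + x^(n-1)` satisfies
`μ^(mq) = 1`, hence `μ^m = 1` because Frobenius is injective. So it suffices that
`L_m (x + ⋯ + x^m/m)` does not vanish at the `m`-th roots of unity of `𝔽̄_q`, i.e. that `q` does not
divide its resultant with `x^m - 1`; over `ℂ` that resultant equals `L_m^m · Y(m) · X(m)`, a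
rational number of `q`-adic valuation `0`.
-/

open Finset

section Resultant

variable {R K : Type*} [CommRing R] [Field K] [Algebra R K]

theorem algebraMap_resultant_eq_prod_roots {g : R[X]} (hg : g.Monic)
    (hsplit : (g.map (algebraMap R K)).Splits) (f : R[X]) :
    algebraMap R K (resultant g f) = ((g.map (algebraMap R K)).roots.map (aeval · f)).prod := by
  rw [← resultant_map_map, ← hg.natDegree_map (algebraMap R K),
    resultant_eq_prod_eval _ _ _ natDegree_map_le hsplit, (hg.map _).leadingCoeff, one_pow,
    one_mul]
  simp only [eval_map_algebraMap]

theorem algebraMap_resultant_ne_zero_iff [IsAlgClosed K] {g : R[X]} (hg : g.Monic) (f : R[X]) :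
    algebraMap R K (resultant g f) ≠ 0 ↔ ∀ x : K, aeval x g = 0 → aeval x f ≠ 0 := by
  rw [algebraMap_resultant_eq_prod_roots hg (IsAlgClosed.splits _), Ne, Multiset.prod_eq_zero_iff]
  simp [mem_roots (hg.map (algebraMap R K)).ne_zero, eval_map_algebraMap]

end Resultant

theorem not_dvd_resultant_iff {q : ℕ} (K : Type*) [Field K] [IsAlgClosed K] [CharP K q]
    {g : ℤ[X]} (hg : g.Monic) (f : ℤ[X]) :
    ¬ (q : ℤ) ∣ resultant g f ↔ ∀ x : K, aeval x g = 0 → aeval x f ≠ 0 := by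
  rw [← CharP.intCast_eq_zero_iff K q, ← eq_intCast (algebraMap ℤ K)]
  exact algebraMap_resultant_ne_zero_iff hg f

theorem monic_X_pow_sub_one {R : Type*} [CommRing R] {m : ℕ} (hm : m ≠ 0) :
    (X ^ m - 1 : R[X]).Monic := by
  simpa using monic_X_pow_sub_C (1 : R) hm

theorem roots_geom_sum_X {K : Type*} [CommRing K] [IsDomain K] [DecidableEq K] {ζ : K} {n : ℕ}
    (hζ : IsPrimitiveRoot ζ n) (hn : 0 < n) :
    (∑ i ∈ range n, (X : K[X]) ^ i).roots = ((nthRootsFinset n (1 : K)).erase 1).val := by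
  have hfac : (X - C 1) * ∑ i ∈ range n, (X : K[X]) ^ i = X ^ n - C 1 := by
    rw [mul_comm, C_1, geom_sum_mul]
  have hroots : nthRoots n (1 : K) = 1 ::ₘ (∑ i ∈ range n, (X : K[X]) ^ i).roots := by
    rw [nthRoots, ← hfac, roots_mul (hfac ▸ X_pow_sub_C_ne_zero hn 1), roots_X_sub_C]
    rfl
  rw [Finset.erase_val, nthRootsFinset_def, Multiset.toFinset_val,
    (hζ.nthRoots_one_nodup).dedup, hroots, Multiset.erase_cons_head]

theorem pow_eq_one_of_aeval_geom_sum_X_eq_zero {K : Type*} [CommRing K] {n : ℕ} {x : K}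
    (hx : aeval x (∑ i ∈ range n, (X : ℤ[X]) ^ i) = 0) : x ^ n = 1 := by
  simp only [map_sum, map_pow, aeval_X] at hx
  rw [← sub_eq_zero, ← geom_sum_mul, hx, zero_mul]

theorem dvd_Ln {k n : ℕ} (hk : k ∈ Icc 1 n) : k ∣ Ln n :=
  Finset.dvd_lcm (f := id) hk

theorem Ln_ne_zero (n : ℕ) : Ln n ≠ 0 :=
  Nat.lcmUpto_ne_zero n

section Valuation

variable {q : ℕ} [hq : Fact q.Prime]

theorem padicValNat_Ln (n : ℕ) : padicValNat q (Ln n) = Nat.log q n := by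
  rw [← Nat.factorization_def _ hq.out]
  exact Nat.factorization_lcmUpto n hq.out

theorem padicValRat_Ln {m : ℕ} (hqm : m < q) : padicValRat q (Ln m) = 0 := by
  rw [padicValRat.of_nat, padicValNat_Ln, Nat.log_of_lt hqm, Nat.cast_zero]

theorem not_dvd_Ln_mul_div {m : ℕ} (hm : 0 < m) (hqm : m < q) : ¬ q ∣ Ln (m * q) / q := by
  have hq_le : q ≤ m * q := Nat.le_mul_of_pos_left q hm
  have hdvd : q ∣ Ln (m * q) := dvd_Ln (mem_Icc.2 ⟨hq.out.one_le, hq_le⟩)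
  have hlog : Nat.log q (m * q) = 1 :=
    Nat.log_eq_one_iff.2 ⟨Nat.mul_lt_mul_of_pos_right hqm hq.out.pos, hq.out.one_lt, hq_le⟩
  rw [dvd_iff_padicValNat_ne_zero (Nat.div_ne_zero_iff_of_dvd hdvd |>.2
      ⟨Ln_ne_zero _, hq.out.ne_zero⟩),
    padicValNat.div_of_dvd hdvd, padicValNat_Ln, hlog, padicValNat_self, not_not]

theorem int_not_dvd_of_padicValRat_eq_zero {z : ℤ} {r : ℚ} (hz : (z : ℚ) = r) (hr : r ≠ 0)
    (hv : padicValRat q r = 0) : ¬ (q : ℤ) ∣ z := by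
  rw [← hz, padicValRat.of_int, Nat.cast_eq_zero, padicValInt.eq_zero_iff] at hv
  exact hv.resolve_left hq.out.ne_one |>.resolve_left (by rintro rfl; exact hr (by simp [← hz]))

end Valuation

noncomputable def logTrunc (K : Type*) [Field K] (n : ℕ) : K[X] :=
  ∑ k ∈ Icc 1 n, C ((k : K)⁻¹) * X ^ k

noncomputable def scaledLogTrunc (n : ℕ) : ℤ[X] :=
  ∑ k ∈ Icc 1 n, C ((Ln n / k : ℕ) : ℤ) * X ^ k

noncomputable def intFtilde (n : ℕ) : ℤ[X] :=
  C (Ln n : ℤ) + scaledLogTrunc n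

theorem coeff_logTrunc (K : Type*) [Field K] (n k : ℕ) :
    (logTrunc K n).coeff k = if k ∈ Icc 1 n then (k : K)⁻¹ else 0 := by
  simp [logTrunc]

theorem coeff_scaledLogTrunc (n k : ℕ) :
    (scaledLogTrunc n).coeff k = if k ∈ Icc 1 n then ((Ln n / k : ℕ) : ℤ) else 0 := by
  simp [scaledLogTrunc]

theorem map_scaledLogTrunc {K : Type*} [Field K] {n : ℕ} (hn : ∀ k ∈ Icc 1 n, (k : K) ≠ 0) :
    (scaledLogTrunc n).map (algebraMap ℤ K) = C (Ln n : K) * logTrunc K n := by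
  simp only [scaledLogTrunc, logTrunc, Polynomial.map_sum, Polynomial.map_mul, map_C,
    Polynomial.map_pow, map_X, mul_sum, ← mul_assoc, ← C_mul]
  refine sum_congr rfl fun k hk => ?_
  rw [eq_intCast, Int.cast_natCast, Nat.cast_div (dvd_Ln hk) (hn k hk), div_eq_mul_inv]

theorem map_scaledLogTrunc_of_charZero {K : Type*} [Field K] [CharZero K] (n : ℕ) :
    (scaledLogTrunc n).map (algebraMap ℤ K) = C (Ln n : K) * logTrunc K n :=
  map_scaledLogTrunc fun _ hk => Nat.cast_ne_zero.2 (Nat.one_le_iff_ne_zero.1 (mem_Icc.1 hk).1)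

theorem intFtilde_map_rat (n : ℕ) : (intFtilde n).map (algebraMap ℤ ℚ) = Ftilde n := by
  rw [intFtilde, Polynomial.map_add, map_scaledLogTrunc_of_charZero, Ftilde, F, map_C,
    eq_intCast, Int.cast_natCast, logTrunc, mul_add, mul_one]

theorem natCast_ne_zero_of_lt {q j : ℕ} (hj : 0 < j) (hjq : j < q) : (j : ZMod q) ≠ 0 := by
  rw [Ne, ZMod.natCast_eq_zero_iff]
  exact Nat.not_dvd_of_pos_of_lt hj hjq

section ReductionModQ

variable {q : ℕ} [hq : Fact q.Prime]

theorem natCast_Ln_div_eq_zero {n k : ℕ} (hqn : q ≤ n) (hk : k ∈ Icc 1 n) (hqk : ¬ q ∣ k) :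
    ((Ln n / k : ℕ) : ZMod q) = 0 := by
  rw [ZMod.natCast_eq_zero_iff]
  exact Nat.dvd_div_of_mul_dvd (Nat.Coprime.mul_dvd_of_dvd_of_dvd
    ((Nat.Prime.coprime_iff_not_dvd hq.out).2 hqk).symm (dvd_Ln hk)
    (dvd_Ln (mem_Icc.2 ⟨hq.out.one_le, hqn⟩)))

theorem natCast_Ln_div_mul_eq {n j : ℕ} (hqn : q ≤ n) (hj : 0 < j) (hjq : j < q) :
    ((Ln n / (q * j) : ℕ) : ZMod q) = ((Ln n / q : ℕ) : ZMod q) / j := by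
  have hqj : q * j ∣ Ln n := Nat.Coprime.mul_dvd_of_dvd_of_dvd
    ((Nat.Prime.coprime_iff_not_dvd hq.out).2 (Nat.not_dvd_of_pos_of_lt hj hjq))
    (dvd_Ln (mem_Icc.2 ⟨hq.out.one_le, hqn⟩)) (dvd_Ln (mem_Icc.2 ⟨hj, hjq.le.trans hqn⟩))
  rw [← Nat.div_div_eq_div_mul, Nat.cast_div (Nat.dvd_div_of_mul_dvd hqj)
    (natCast_ne_zero_of_lt hj hjq)]

theorem intFtilde_map_zmod {m : ℕ} (hm : 0 < m) (hqm : m < q) :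
    (intFtilde (m * q)).map (algebraMap ℤ (ZMod q)) =
      C ((Ln (m * q) / q : ℕ) : ZMod q) * logTrunc (ZMod q) m ^ q := by
  have hqn : q ≤ m * q := Nat.le_mul_of_pos_left q hm
  have hconst : (C (Ln (m * q) : ℤ)).map (algebraMap ℤ (ZMod q)) = 0 := by
    rw [map_C, eq_intCast, Int.cast_natCast, (ZMod.natCast_eq_zero_iff _ _).2
      (dvd_Ln (mem_Icc.2 ⟨hq.out.one_le, hqn⟩)), C_0]
  rw [intFtilde, Polynomial.map_add, hconst, zero_add, ← ZMod.expand_card]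
  ext k
  rw [coeff_map, coeff_scaledLogTrunc, coeff_C_mul, coeff_expand hq.out.pos, coeff_logTrunc,
    apply_ite (algebraMap ℤ (ZMod q)), map_zero, eq_intCast, Int.cast_natCast]
  by_cases hk : q ∣ k
  · obtain ⟨j, rfl⟩ := hk
    have hmem : q * j ∈ Icc 1 (m * q) ↔ j ∈ Icc 1 m := by
      simp only [mem_Icc, Nat.one_le_iff_ne_zero, mul_ne_zero_iff, ne_eq, hq.out.ne_zero,
        not_false_eq_true, true_and, mul_comm m q, Nat.mul_le_mul_left_iff hq.out.pos]
    rw [if_pos (dvd_mul_right q j), Nat.mul_div_cancel_left j hq.out.pos]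
    by_cases hj : j ∈ Icc 1 m
    · rw [if_pos (hmem.2 hj), if_pos hj, ← div_eq_mul_inv,
        natCast_Ln_div_mul_eq hqn (mem_Icc.1 hj).1 ((mem_Icc.1 hj).2.trans_lt hqm)]
    · rw [if_neg (hmem.not.2 hj), if_neg hj, mul_zero]
  · rw [if_neg hk, mul_zero]
    split_ifs with hk'
    · exact natCast_Ln_div_eq_zero hqn hk' hk
    · rfl

theorem aeval_intFtilde_mul_ne_zero {K : Type*} [Field K] [Algebra (ZMod q) K] {m : ℕ}
    (hm : 0 < m) (hqm : m < q) {μ : K} (hμ : aeval μ (scaledLogTrunc m) ≠ 0) :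
    aeval μ (intFtilde (m * q)) ≠ 0 := by
  have hlog : aeval μ (scaledLogTrunc m) =
      algebraMap (ZMod q) K (Ln m) * aeval μ (logTrunc (ZMod q) m) := by
    rw [← aeval_map_algebraMap (ZMod q), map_scaledLogTrunc fun k hk =>
      natCast_ne_zero_of_lt (mem_Icc.1 hk).1 ((mem_Icc.1 hk).2.trans_lt hqm), map_mul, aeval_C]
  rw [← aeval_map_algebraMap (ZMod q), intFtilde_map_zmod hm hqm, map_mul, map_pow, aeval_C]
  refine mul_ne_zero ?_ (pow_ne_zero _ fun h => hμ (by rw [hlog, h, mul_zero]))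
  rw [_root_.map_ne_zero, Ne, ZMod.natCast_eq_zero_iff]
  exact not_dvd_Ln_mul_div hm hqm

end ReductionModQ

theorem intCast_resultant_geom_sum_X {n : ℕ} (hn : 0 < n) (f : ℤ[X]) :
    ((resultant (∑ i ∈ range n, (X : ℤ[X]) ^ i) f : ℤ) : ℂ) =
      ∏ θ ∈ (nthRootsFinset n (1 : ℂ)).erase 1, aeval θ f := by
  rw [← eq_intCast (algebraMap ℤ ℂ), algebraMap_resultant_eq_prod_roots (monic_geom_sum_X hn.ne')
    (IsAlgClosed.splits _)]
  simp only [Polynomial.map_sum, Polynomial.map_pow, map_X]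
  rw [roots_geom_sum_X (Complex.isPrimitiveRoot_exp n hn.ne') hn, prod_eq_multiset_prod]

theorem P_eq_intCast_resultant {n : ℕ} (hn : 0 < n) :
    P n = ((resultant (∑ i ∈ range n, (X : ℤ[X]) ^ i) (intFtilde n) : ℤ) : ℂ) := by
  simp only [P, intCast_resultant_geom_sum_X hn, ← intFtilde_map_rat, aeval_map_algebraMap]

theorem intCast_resultant_X_pow_sub_one {m : ℕ} (hm : 0 < m) {ω : ℂ} (hω : IsPrimitiveRoot ω m)
    (f : ℤ[X]) :
    ((resultant (X ^ m - 1 : ℤ[X]) f : ℤ) : ℂ) = ∏ k ∈ range m, aeval (ω ^ k) f := by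
  rw [← eq_intCast (algebraMap ℤ ℂ), algebraMap_resultant_eq_prod_roots
    (monic_X_pow_sub_one hm.ne') (IsAlgClosed.splits _), Polynomial.map_sub, Polynomial.map_pow,
    map_X, Polynomial.map_one, ← C_1]
  change ((nthRoots m (1 : ℂ)).map (aeval · f)).prod = _
  rw [hω.nthRoots_eq (one_pow m), Multiset.map_map, prod_eq_multiset_prod, range_val]
  simp

theorem aeval_scaledLogTrunc_of_pow_eq_one {m : ℕ} (hm : 0 < m) {θ : ℂ} (hθ : θ ^ m = 1) :
    aeval θ (scaledLogTrunc m) =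
      Ln m * ((m : ℂ)⁻¹ + ∑ j ∈ Icc 1 (m - 1), θ ^ j / (j : ℂ)) := by
  obtain ⟨m, rfl⟩ : ∃ m', m = m' + 1 := ⟨m - 1, by omega⟩
  rw [← eval_map_algebraMap, map_scaledLogTrunc_of_charZero, eval_mul, eval_C, logTrunc,
    eval_finsetSum, sum_Icc_succ_top (by omega), Nat.add_sub_cancel]
  simp only [eval_mul, eval_C, eval_pow, eval_X, hθ, div_eq_inv_mul]
  ring

theorem prod_aeval_scaledLogTrunc {m : ℕ} (hm : 0 < m) {ω : ℂ} (hω : IsPrimitiveRoot ω m) :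
    ∏ k ∈ range m, aeval (ω ^ k) (scaledLogTrunc m) = Ln m ^ m * (Y m * Xc m ω) := by
  rw [prod_congr rfl fun k _ => aeval_scaledLogTrunc_of_pow_eq_one hm (by
      rw [← pow_mul, mul_comm, pow_mul, hω.pow_eq_one, one_pow]),
    prod_mul_distrib, prod_const, card_range, prod_range_eq_mul_Ico _ hm]
  obtain ⟨m, rfl⟩ : ∃ m', m = m' + 1 := ⟨m - 1, by omega⟩
  rw [Xc, Y, Nat.add_sub_cancel, Finset.Ico_add_one_right_eq_Icc, Rat.cast_sum,
    sum_Icc_succ_top (by omega)]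
  congr 2
  · simp only [one_pow, Rat.cast_inv, Rat.cast_natCast, one_div, pow_zero]
    ring
  · refine prod_congr rfl fun k _ => ?_
    simp only [← pow_mul, mul_comm k]

theorem not_dvd_resultant_X_pow_sub_one {q m : ℕ} [Fact q.Prime] (hm : 0 < m) (hqm : m < q)
    {ω : ℂ} (hω : IsPrimitiveRoot ω m)
    (hX : ∃ x : ℚ, (x : ℂ) = Xc m ω ∧ x ≠ 0 ∧ padicValRat q x = 0)
    (hY : Y m ≠ 0 ∧ padicValRat q (Y m) = 0) :
    ¬ (q : ℤ) ∣ resultant (X ^ m - 1 : ℤ[X]) (scaledLogTrunc m) := by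
  obtain ⟨x, hxc, hx0, hxv⟩ := hX
  have hL : (Ln m : ℚ) ≠ 0 := Nat.cast_ne_zero.2 (Ln_ne_zero m)
  refine int_not_dvd_of_padicValRat_eq_zero (r := Ln m ^ m * (Y m * x)) ?_
    (mul_ne_zero (pow_ne_zero _ hL) (mul_ne_zero hY.1 hx0)) ?_
  · apply Rat.cast_injective (α := ℂ)
    push_cast
    rw [intCast_resultant_X_pow_sub_one hm hω, prod_aeval_scaledLogTrunc hm hω, hxc]
  · rw [padicValRat.mul (pow_ne_zero _ hL) (mul_ne_zero hY.1 hx0), padicValRat.pow,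
      padicValRat.mul hY.1 hx0, padicValRat_Ln hqm, hY.2, hxv]
    simp

theorem stmt10_general (m q n : ℕ) (hm : 0 < m) (hq : q.Prime) (hqm : m < q)
    (hn : n = m * q) (ω : ℂ) (hω : IsPrimitiveRoot ω m)
    (hX : ∃ x : ℚ, (x : ℂ) = Xc m ω ∧ x ≠ 0 ∧ padicValRat q x = 0)
    (hY : Y m ≠ 0 ∧ padicValRat q (Y m) = 0) :
    ∃ z : ℤ, (z : ℂ) = P n ∧ ¬ ((q : ℤ) ∣ z) := by
  have := Fact.mk hq
  subst hn
  have hn : 0 < m * q := Nat.mul_pos hm hq.pos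
  refine ⟨_, (P_eq_intCast_resultant hn).symm, ?_⟩
  have hres := not_dvd_resultant_X_pow_sub_one hm hqm hω hX hY
  rw [not_dvd_resultant_iff (AlgebraicClosure (ZMod q)) (monic_X_pow_sub_one hm.ne')] at hres
  rw [not_dvd_resultant_iff (AlgebraicClosure (ZMod q)) (monic_geom_sum_X hn.ne')]
  intro μ hμ
  have hμm : μ ^ m = 1 := (ExpChar.pow_prime_pow_mul_eq_one_iff q 1 m μ).1 (by
    rw [pow_one, mul_comm]; exact pow_eq_one_of_aeval_geom_sum_X_eq_zero hμ)
  exact aeval_intFtilde_mul_ne_zero hm hqm (hres μ (by simp [hμm]))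

/-- Fix `m ≥ 1` and a prime `q > m` with `gcd(q, m) = 1`, and set `n = m*q`.
If `X(m)` and `Y(m)` are rationals of `q`-adic valuation 0, then the integer `𝒫 n` is not
divisible by `q`. -/
theorem stmt10 (m q n : ℕ) (hm : 0 < m) (hq : q.Prime) (hqm : m < q)
    (hgcd : Nat.gcd q m = 1) (hn : n = m * q) (ω : ℂ) (hω : IsPrimitiveRoot ω m)
    (hX : ∃ x : ℚ, (x : ℂ) = Xc m ω ∧ x ≠ 0 ∧ padicValRat q x = 0)
    (hY : Y m ≠ 0 ∧ padicValRat q (Y m) = 0) :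
    ∃ z : ℤ, (z : ℂ) = P n ∧ ¬ ((q : ℤ) ∣ z) :=
  stmt10_general m q n hm hq hqm hn ω hω hX hY
end
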